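/- arXiv:1910.10800 — 3 statements merged into one kernel-verified Lean document; each statement's English description precedes it below -/
import Mathlib

section
/- Let Φ be a finite crystallographic root system with positive system Φ⁺ and half-sum of positive roots ρ, and let Φ_H ⊆ Φ be a subsystem with Φ_H⁺ = Φ_H ∩ Φ⁺ and half-sum ρ_H. Let w be a Weyl group element of Φ such that wλ is Φ_H⁺-dominant for every Φ⁺-dominant weight λ. Let μ* be a weight with ⟨μ*, α∨⟩ = 0 for all α ∈ Φ_H. Then for every Φ⁺-dominant weight μ, setting μ' = w(μ + ρ) − ρ_H − μ*, one has min_{α∈Φ_H⁺} ⟨μ', α∨⟩ ≥ min_{α∈Φ⁺} ⟨μ, α∨⟩. In particular, if μ is regular (all pairings with Φ⁺ positive) then μ' is regular for Φ_H. -/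
namespace TWR

variable {X : Type*} [AddCommGroup X] [Module ℚ X]

/-- The auxiliary sum-of-products form. -/
def B (Φ : Finset X) (coroot : X → X →ₗ[ℚ] ℚ) (x y : X) : ℚ :=
  ∑ γ ∈ Φ, coroot γ x * coroot γ y

theorem B_symm (Φ : Finset X) (coroot : X → X →ₗ[ℚ] ℚ) (x y : X) :
    B Φ coroot x y = B Φ coroot y x := by
  unfold B; exact Finset.sum_congr rfl fun γ _ => mul_comm _ _

theorem B_self_nonneg (Φ : Finset X) (coroot : X → X →ₗ[ℚ] ℚ) (x : X) :
    0 ≤ B Φ coroot x x :=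
  Finset.sum_nonneg fun γ _ => mul_self_nonneg _

theorem B_add_left (Φ : Finset X) (coroot : X → X →ₗ[ℚ] ℚ) (x y z : X) :
    B Φ coroot (x + y) z = B Φ coroot x z + B Φ coroot y z := by
  unfold B
  rw [← Finset.sum_add_distrib]
  exact Finset.sum_congr rfl fun γ _ => by rw [map_add]; ring

theorem B_smul_left (Φ : Finset X) (coroot : X → X →ₗ[ℚ] ℚ) (q : ℚ) (x z : X) :
    B Φ coroot (q • x) z = q * B Φ coroot x z := by
  unfold B
  rw [Finset.mul_sum]
  exact Finset.sum_congr rfl fun γ _ => by rw [map_smul]; simp [smul_eq_mul]; ring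

theorem B_null (Φ : Finset X) (coroot : X → X →ₗ[ℚ] ℚ) (v : X)
    (hv : B Φ coroot v v = 0) : ∀ δ ∈ Φ, coroot δ v = 0 := by
  intro δ hδ
  have h := (Finset.sum_eq_zero_iff_of_nonneg
    (fun γ (_ : γ ∈ Φ) => mul_self_nonneg (coroot γ v))).1 hv δ hδ
  exact mul_self_eq_zero.1 h

theorem B_null_pair (Φ : Finset X) (coroot : X → X →ₗ[ℚ] ℚ) (v y : X)
    (hv : ∀ δ ∈ Φ, coroot δ v = 0) : B Φ coroot v y = 0 :=
  Finset.sum_eq_zero fun γ hγ => by rw [hv γ hγ, zero_mul]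

/-- Reindexing a sum over `Φ` by the reflection in `α`. -/
theorem sum_reflect (Φ : Finset X) (coroot : X → X →ₗ[ℚ] ℚ) {α : X} (hα : α ∈ Φ)
    (h2 : coroot α α = 2) (hrefl : ∀ γ ∈ Φ, γ - coroot α γ • α ∈ Φ)
    (F : X → ℚ) :
    ∑ γ ∈ Φ, F (γ - coroot α γ • α) = ∑ γ ∈ Φ, F γ := by
  have hinv : ∀ γ : X, (γ - coroot α γ • α) - coroot α (γ - coroot α γ • α) • α = γ := by
    intro γ
    have : coroot α (γ - coroot α γ • α) = - coroot α γ := by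
      simp [map_sub, map_smul, h2, smul_eq_mul]; ring
    rw [this, neg_smul, sub_neg_eq_add, sub_add_cancel]
  refine Finset.sum_nbij' (fun γ => γ - coroot α γ • α) (fun γ => γ - coroot α γ • α)
    (fun γ hγ => hrefl γ hγ) (fun γ hγ => hrefl γ hγ)
    (fun γ _ => hinv γ) (fun γ _ => hinv γ) (fun γ _ => rfl)

theorem sref_invol (coroot : X → X →ₗ[ℚ] ℚ) {α : X} (h2 : coroot α α = 2) (γ : X) :
    (γ - coroot α γ • α) - coroot α (γ - coroot α γ • α) • α = γ := by
  have : coroot α (γ - coroot α γ • α) = - coroot α γ := by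
    simp [map_sub, map_smul, h2, smul_eq_mul]; ring
  rw [this, neg_smul, sub_neg_eq_add, sub_add_cancel]

theorem root_ne_zero {Φ : Finset X} {coroot : X → X →ₗ[ℚ] ℚ} {α : X} (hα : α ∈ Φ)
    (h2 : ∀ α ∈ Φ, coroot α α = 2) : α ≠ 0 := by
  intro h
  have := h2 α hα
  rw [h] at this
  simp at this

theorem int_one_le {q : ℚ} (h : ∃ m : ℤ, q = m) (hq : 0 < q) : 1 ≤ q := by
  obtain ⟨m, rfl⟩ := h
  have : (0:ℤ) < m := by exact_mod_cast hq
  exact_mod_cast this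

theorem int_one_or_two_le {q : ℚ} (h : ∃ m : ℤ, q = m) (hq : 1 ≤ q) : q = 1 ∨ 2 ≤ q := by
  obtain ⟨m, rfl⟩ := h
  have : (1:ℤ) ≤ m := by exact_mod_cast hq
  rcases eq_or_lt_of_le this with h' | h'
  · left; exact_mod_cast h'.symm
  · right; exact_mod_cast h'

section Form

variable (Φ : Finset X) (coroot : X → X →ₗ[ℚ] ℚ)

theorem B_sub_left (x y z : X) :
    B Φ coroot (x - y) z = B Φ coroot x z - B Φ coroot y z := by
  unfold B
  rw [← Finset.sum_sub_distrib]
  exact Finset.sum_congr rfl fun γ _ => by rw [map_sub]; ring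

/-- The key consequence of reflection-equivariance: `⟨y, α∨⟩ = 2 B(α,y)/B(α,α)`. -/
theorem B_coroot {α : X} (hα : α ∈ Φ)
    (h2 : coroot α α = 2) (hrefl : ∀ γ ∈ Φ, γ - coroot α γ • α ∈ Φ)
    (hE : ∀ γ ∈ Φ, ∀ x : X, coroot (γ - coroot α γ • α) (x - coroot α x • α) = coroot γ x)
    (y : X) :
    coroot α y * B Φ coroot α α = 2 * B Φ coroot α y := by
  -- invariance of B under the reflection in α
  have hinvB : ∀ u v : X,
      B Φ coroot (u - coroot α u • α) (v - coroot α v • α) = B Φ coroot u v := by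
    intro u v
    unfold B
    rw [← sum_reflect Φ coroot hα h2 hrefl
      (fun γ => coroot γ (u - coroot α u • α) * coroot γ (v - coroot α v • α))]
    exact Finset.sum_congr rfl fun γ hγ => by rw [hE γ hγ u, hE γ hγ v]
  have h1 := hinvB α y
  have hsα : α - coroot α α • α = -α := by rw [h2]; module
  rw [hsα] at h1
  have e1 : B Φ coroot (-α) (y - coroot α y • α)
      = -(B Φ coroot α y - coroot α y * B Φ coroot α α) := by
    have := B_sub_left Φ coroot y (coroot α y • α) α
    rw [show (-α : X) = (-1 : ℚ) • α by module, B_smul_left,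
      B_symm Φ coroot α (y - coroot α y • α), B_sub_left, B_smul_left,
      B_symm Φ coroot y α]
    ring
  rw [e1] at h1
  linarith

theorem B_self_pos {α : X} (hα : α ∈ Φ) (h2 : coroot α α = 2) :
    0 < B Φ coroot α α := by
  have h := Finset.single_le_sum (f := fun γ => coroot γ α * coroot γ α)
    (fun i _ => mul_self_nonneg _) hα
  simp only [h2] at h
  have : (4:ℚ) ≤ B Φ coroot α α := by unfold B; linarith
  linarith

theorem coroot_sign (h2 : ∀ α ∈ Φ, coroot α α = 2)
    (hBc : ∀ α ∈ Φ, ∀ y : X, coroot α y * B Φ coroot α α = 2 * B Φ coroot α y)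
    {α γ : X} (hα : α ∈ Φ) (hγ : γ ∈ Φ) (h : 0 < coroot α γ) : 0 < coroot γ α := by
  have ha := B_self_pos Φ coroot hα (h2 α hα)
  have hb := B_self_pos Φ coroot hγ (h2 γ hγ)
  have h1 := hBc α hα γ
  have h2' := hBc γ hγ α
  rw [B_symm Φ coroot γ α] at h2'
  nlinarith

theorem prod_le_four (h2 : ∀ α ∈ Φ, coroot α α = 2)
    (hBc : ∀ α ∈ Φ, ∀ y : X, coroot α y * B Φ coroot α α = 2 * B Φ coroot α y)
    {α γ : X} (hα : α ∈ Φ) (hγ : γ ∈ Φ) :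
    coroot α γ * coroot γ α ≤ 4 := by
  have ha := B_self_pos Φ coroot hα (h2 α hα)
  have hb := B_self_pos Φ coroot hγ (h2 γ hγ)
  have hs : B Φ coroot γ α = B Φ coroot α γ := B_symm _ _ _ _
  have h1 := hBc α hα γ
  have h2' := hBc γ hγ α
  rw [hs] at h2'
  have e1 : ∀ x : X, B Φ coroot (B Φ coroot γ γ • α - B Φ coroot α γ • γ) x
      = B Φ coroot γ γ * B Φ coroot α x - B Φ coroot α γ * B Φ coroot γ x := fun x => by
    rw [B_sub_left, B_smul_left, B_smul_left]
  have h0 := B_self_nonneg Φ coroot (B Φ coroot γ γ • α - B Φ coroot α γ • γ)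
  have f1 : B Φ coroot α (B Φ coroot γ γ • α - B Φ coroot α γ • γ)
      = B Φ coroot γ γ * B Φ coroot α α - B Φ coroot α γ * B Φ coroot α γ := by
    rw [B_symm Φ coroot α, e1, hs]
  have f2 : B Φ coroot γ (B Φ coroot γ γ • α - B Φ coroot α γ • γ)
      = B Φ coroot γ γ * B Φ coroot α γ - B Φ coroot α γ * B Φ coroot γ γ := by
    rw [B_symm Φ coroot γ, e1]
  rw [e1, f1, f2] at h0
  have hcs : B Φ coroot α γ * B Φ coroot α γ ≤ B Φ coroot α α * B Φ coroot γ γ := by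
    nlinarith [h0, hb]
  have hp : (coroot α γ * B Φ coroot α α) * (coroot γ α * B Φ coroot γ γ)
      = (2 * B Φ coroot α γ) * (2 * B Φ coroot α γ) := by rw [h1, h2']
  nlinarith [hp, hcs, mul_pos ha hb]

theorem cs4 (h2 : ∀ α ∈ Φ, coroot α α = 2)
    (hrefl : ∀ α ∈ Φ, ∀ β ∈ Φ, β - coroot α β • α ∈ Φ)
    (hBc : ∀ α ∈ Φ, ∀ y : X, coroot α y * B Φ coroot α α = 2 * B Φ coroot α y)
    {α γ : X} (hα : α ∈ Φ) (hγ : γ ∈ Φ)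
    (hc : 0 < coroot γ α) (hprod : coroot α γ * coroot γ α = 4) :
    ∃ q : ℚ, α = q • γ := by
  have hc' : 0 < coroot α γ := by nlinarith
  have ha := B_self_pos Φ coroot hα (h2 α hα)
  have hb := B_self_pos Φ coroot hγ (h2 γ hγ)
  have hs : B Φ coroot γ α = B Φ coroot α γ := B_symm _ _ _ _
  have hcb : coroot γ α * B Φ coroot γ γ = 2 * B Φ coroot α γ := by
    have h := hBc γ hγ α
    rw [hs] at h
    exact h
  have hc'a : coroot α γ * B Φ coroot α α = 2 * B Φ coroot α γ := hBc α hα γ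
  set v := α - (coroot γ α / 2) • γ with hvdef
  have hBva : ∀ x : X, B Φ coroot v x
      = B Φ coroot α x - (coroot γ α / 2) * B Φ coroot γ x := by
    intro x; rw [hvdef, B_sub_left, B_smul_left]
  have hBvv : B Φ coroot v v = 0 := by
    have f1 : B Φ coroot α v = B Φ coroot α α - (coroot γ α / 2) * B Φ coroot α γ := by
      rw [B_symm Φ coroot α v, hBva α, hs]
    have f2 : B Φ coroot γ v = B Φ coroot α γ - (coroot γ α / 2) * B Φ coroot γ γ := by
      rw [B_symm Φ coroot γ v, hBva γ]
    rw [hBva v, f1, f2]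
    linear_combination (coroot γ α / 4) * hcb + (coroot γ α / 4) * hc'a
      - (B Φ coroot α α / 4) * hprod
  have hv0 : ∀ δ ∈ Φ, coroot δ v = 0 := B_null Φ coroot v hBvv
  have hαv : α = (coroot γ α / 2) • γ + v := by rw [hvdef]; module
  have hfun : ∀ y : X, coroot α y * B Φ coroot α α = B Φ coroot α γ * coroot γ y := by
    intro y
    have h1 := hBc α hα y
    have h2' := hBc γ hγ y
    have hvy : B Φ coroot v y = 0 := B_null_pair Φ coroot v y hv0
    have e : B Φ coroot α y = (coroot γ α / 2) * B Φ coroot γ y := by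
      have h3 := hBva y
      linarith
    linear_combination h1 + 2 * e - (coroot γ α / 2) * h2' + (coroot γ y / 2) * hcb
  have hγv : coroot γ v = 0 := hv0 γ hγ
  have hγT : ∀ q : ℚ, coroot γ (γ + q • v) = 2 := by
    intro q
    simp [map_add, map_smul, h2 γ hγ, hγv, smul_eq_mul]
  have hTmem : ∀ n : ℕ, γ + ((n : ℚ) * coroot α γ) • v ∈ Φ := by
    intro n
    induction n with
    | zero => simpa using hγ
    | succ n ih =>
      have m1 := hrefl γ hγ _ ih
      rw [hγT ((n : ℚ) * coroot α γ)] at m1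
      set u := γ + ((n : ℚ) * coroot α γ) • v - (2 : ℚ) • γ with hu
      have huγ : coroot γ u = -2 := by
        rw [hu]
        simp [map_add, map_sub, map_smul, h2 γ hγ, hγv, smul_eq_mul]
        norm_num
      have huα : coroot α u = -(coroot α γ) := by
        have h := hfun u
        rw [huγ] at h
        have h4 : coroot α u * B Φ coroot α α = -(coroot α γ) * B Φ coroot α α := by
          linarith [hc'a]
        exact mul_right_cancel₀ (ne_of_gt ha) h4
      have m2 := hrefl α hα u m1
      rw [huα] at m2
      have heq : u - (-(coroot α γ)) • α = γ + (((n : ℚ) + 1) * coroot α γ) • v := by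
        have hα2 : (-(coroot α γ)) • α
            = (-(coroot α γ)) • (((coroot γ α) / 2) • γ + v) := by rw [← hαv]
        rw [hu, hα2]
        match_scalars
        · linear_combination hprod / 2
        · ring
      rw [heq] at m2
      have hcast : ((n + 1 : ℕ) : ℚ) = (n : ℚ) + 1 := by push_cast; ring
      rw [hcast]
      exact m2
  by_cases hv : v = 0
  · refine ⟨coroot γ α / 2, ?_⟩
    conv_lhs => rw [hαv]
    rw [hv, add_zero]
  · exfalso
    have hinj : Function.Injective (fun n : ℕ => γ + ((n : ℚ) * coroot α γ) • v) := by
      intro n m hnm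
      simp only at hnm
      have h1 : ((n : ℚ) * coroot α γ) • v = ((m : ℚ) * coroot α γ) • v :=
        add_left_cancel hnm
      have h0 : (((n : ℚ) - m) * coroot α γ) • v = 0 := by
        rw [sub_mul, sub_smul, h1, sub_self]
      rcases smul_eq_zero.mp h0 with h | h
      · rcases mul_eq_zero.mp h with h' | h'
        · have : (n : ℚ) = m := by linarith [sub_eq_zero.mp h']
          exact_mod_cast this
        · exact absurd h' (ne_of_gt hc')
      · exact absurd h hv
    exact Set.not_infinite.mpr Φ.finite_toSet
      (Set.infinite_of_injective_forall_mem hinj fun n => hTmem n)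

theorem prod_le_three (h2 : ∀ α ∈ Φ, coroot α α = 2)
    (hrefl : ∀ α ∈ Φ, ∀ β ∈ Φ, β - coroot α β • α ∈ Φ)
    (hred : ∀ α ∈ Φ, ∀ c : ℚ, c • α ∈ Φ → c = 1 ∨ c = -1)
    (hcrys : ∀ α ∈ Φ, ∀ β ∈ Φ, ∃ m : ℤ, coroot α β = (m : ℚ))
    (hBc : ∀ α ∈ Φ, ∀ y : X, coroot α y * B Φ coroot α α = 2 * B Φ coroot α y)
    {α γ : X} (hα : α ∈ Φ) (hγ : γ ∈ Φ) (hne : α ≠ γ) (hne' : α ≠ -γ)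
    (hc : 0 < coroot γ α) :
    coroot α γ * coroot γ α ≤ 3 := by
  have h4 := prod_le_four Φ coroot h2 hBc hα hγ
  have hneq : coroot α γ * coroot γ α ≠ 4 := by
    intro hq
    obtain ⟨q, hqγ⟩ := cs4 Φ coroot h2 hrefl hBc hα hγ hc hq
    rcases hred γ hγ q (hqγ ▸ hα) with h1 | h1
    · rw [h1, one_smul] at hqγ; exact hne hqγ
    · rw [h1, neg_smul, one_smul] at hqγ; exact hne' hqγ
  obtain ⟨m, hm⟩ := hcrys α hα γ hγ
  obtain ⟨m', hm'⟩ := hcrys γ hγ α hα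
  rw [hm, hm'] at h4 hneq ⊢
  have h4' : m * m' ≤ 4 := by exact_mod_cast h4
  have hne4 : m * m' ≠ 4 := by exact_mod_cast hneq
  have : m * m' ≤ 3 := by omega
  exact_mod_cast this

end Form

section Sub

variable (Φ ΦH : Finset X) (coroot : X → X →ₗ[ℚ] ℚ)

/-- Lemma A: if `⟨ζ, ξ∨⟩ ≥ 1` and `ζ ≠ ±ξ` then `ζ - ξ` is a root of the subsystem. -/
theorem lemA (h2 : ∀ α ∈ Φ, coroot α α = 2)
    (hrefl : ∀ α ∈ Φ, ∀ β ∈ Φ, β - coroot α β • α ∈ Φ)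
    (hred : ∀ α ∈ Φ, ∀ c : ℚ, c • α ∈ Φ → c = 1 ∨ c = -1)
    (hcrys : ∀ α ∈ Φ, ∀ β ∈ Φ, ∃ m : ℤ, coroot α β = (m : ℚ))
    (hBc : ∀ α ∈ Φ, ∀ y : X, coroot α y * B Φ coroot α α = 2 * B Φ coroot α y)
    (hHsub : ΦH ⊆ Φ)
    (hHneg : ∀ α ∈ ΦH, -α ∈ ΦH)
    (hHrefl : ∀ α ∈ ΦH, ∀ β ∈ ΦH, β - coroot α β • α ∈ ΦH)
    {ξ ζ : X} (hξ : ξ ∈ ΦH) (hζ : ζ ∈ ΦH) (hne : ζ ≠ ξ) (hne' : ζ ≠ -ξ)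
    (h1 : 1 ≤ coroot ξ ζ) : ζ - ξ ∈ ΦH := by
  have hξΦ := hHsub hξ
  have hζΦ := hHsub hζ
  have hc2pos : 0 < coroot ζ ξ :=
    coroot_sign Φ coroot h2 hBc hξΦ hζΦ (by linarith)
  have hc2 : 1 ≤ coroot ζ ξ := int_one_le (hcrys ζ hζΦ ξ hξΦ) hc2pos
  have h3 := prod_le_three Φ coroot h2 hrefl hred hcrys hBc hζΦ hξΦ hne hne'
    (by linarith : 0 < coroot ξ ζ)
  rcases int_one_or_two_le (hcrys ξ hξΦ ζ hζΦ) h1 with he | hge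
  · have := hHrefl ξ hξ ζ hζ
    rw [he, one_smul] at this
    exact this
  · have hc2e : coroot ζ ξ = 1 := by
      rcases int_one_or_two_le (hcrys ζ hζΦ ξ hξΦ) hc2 with he' | hge'
      · exact he'
      · nlinarith
    have := hHrefl ζ hζ ξ hξ
    rw [hc2e, one_smul] at this
    have h' := hHneg _ this
    rw [neg_sub] at h'
    exact h'

end Sub

section Rho

variable (Φ : Finset X) (coroot : X → X →ₗ[ℚ] ℚ)

theorem two_le_sum_pos (f : X →ₗ[ℚ] ℚ) (hf : ∀ α ∈ Φ, f α ≠ 0)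
    (h2 : ∀ α ∈ Φ, coroot α α = 2)
    (Φ' P : Finset X) (hsub : Φ' ⊆ Φ)
    (h'refl : ∀ α ∈ Φ', ∀ β ∈ Φ', β - coroot α β • α ∈ Φ')
    (hP : P = Φ'.filter (fun α => 0 < f α))
    {δ : X} (hδ : δ ∈ P) :
    2 ≤ coroot δ (∑ γ ∈ P, γ) := by
  have hδ' := hδ
  rw [hP, Finset.mem_filter] at hδ'
  obtain ⟨hδΦ', hδf⟩ := hδ'
  have hδΦ := hsub hδΦ'
  have h2δ := h2 δ hδΦ
  have hPmem : ∀ γ ∈ P, γ ∈ Φ' ∧ 0 < f γ := by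
    intro γ hγ; rw [hP, Finset.mem_filter] at hγ; exact hγ
  have hcs : ∀ γ : X, coroot δ (γ - coroot δ γ • δ) = -(coroot δ γ) := by
    intro γ; simp [map_sub, map_smul, h2δ, smul_eq_mul]; ring
  rw [map_sum]
  have hsplit := Finset.sum_filter_add_sum_filter_not P
    (fun γ => 0 < f (γ - coroot δ γ • δ)) (fun γ => coroot δ γ)
  have hA : ∑ γ ∈ P.filter (fun γ => 0 < f (γ - coroot δ γ • δ)), coroot δ γ = 0 := by
    refine Finset.sum_involution (fun a _ => a - coroot δ a • δ) ?_ ?_ ?_ ?_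
    · intro a _
      rw [hcs a]; ring
    · intro a _ hfa habs
      have : coroot δ a • δ = 0 := by
        have := sub_eq_self.mp habs
        exact this
      rcases smul_eq_zero.mp this with h | h
      · exact hfa h
      · exact root_ne_zero hδΦ h2 h
    · intro a ha
      rw [Finset.mem_filter] at ha ⊢
      obtain ⟨haP, hafs⟩ := ha
      obtain ⟨haΦ', _⟩ := hPmem a haP
      have hmem' : a - coroot δ a • δ ∈ Φ' := h'refl δ hδΦ' a haΦ'
      have hmemP : a - coroot δ a • δ ∈ P := by
        rw [hP, Finset.mem_filter]; exact ⟨hmem', hafs⟩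
      refine ⟨hmemP, ?_⟩
      rw [sref_invol coroot h2δ a]
      exact (hPmem a haP).2
    · intro a _
      exact sref_invol coroot h2δ a
  have hN : 2 ≤ ∑ γ ∈ P.filter (fun γ => ¬ 0 < f (γ - coroot δ γ • δ)), coroot δ γ := by
    have hδN : δ ∈ P.filter (fun γ => ¬ 0 < f (γ - coroot δ γ • δ)) := by
      rw [Finset.mem_filter]
      refine ⟨hδ, ?_⟩
      have : δ - coroot δ δ • δ = -δ := by rw [h2δ]; module
      rw [this, map_neg]
      linarith
    have hterm : ∀ γ ∈ P.filter (fun γ => ¬ 0 < f (γ - coroot δ γ • δ)),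
        0 ≤ coroot δ γ := by
      intro γ hγ
      rw [Finset.mem_filter] at hγ
      obtain ⟨hγP, hγneg⟩ := hγ
      obtain ⟨hγΦ', hγf⟩ := hPmem γ hγP
      have hmem : γ - coroot δ γ • δ ∈ Φ := hsub (h'refl δ hδΦ' γ hγΦ')
      have hne := hf _ hmem
      have hlt : f (γ - coroot δ γ • δ) < 0 := lt_of_le_of_ne (not_lt.mp hγneg) hne
      rw [map_sub, map_smul, smul_eq_mul] at hlt
      nlinarith
    have := Finset.single_le_sum hterm hδN
    rw [h2δ] at this
    exact this
  linarith

end Rho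

section Decomp

variable (Φ ΦH : Finset X) (coroot : X → X →ₗ[ℚ] ℚ)

theorem B_add_right (x y z : X) :
    B Φ coroot x (y + z) = B Φ coroot x y + B Φ coroot x z := by
  rw [B_symm Φ coroot x (y+z), B_add_left, B_symm Φ coroot y x, B_symm Φ coroot z x]

theorem B_zero_right (x : X) : B Φ coroot x 0 = 0 := by
  unfold B
  exact Finset.sum_eq_zero fun γ _ => by simp

theorem B_multiset_sum (x : X) (L : Multiset X) :
    B Φ coroot x L.sum = (L.map (fun γ => B Φ coroot x γ)).sum := by
  induction L using Multiset.induction with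
  | empty => simp [B_zero_right]
  | cons a s ih => simp [B_add_right, ih]

/-- Every positive element decomposes into a sum of indecomposables. -/
theorem decomp_exists (f : X →ₗ[ℚ] ℚ) (P : Finset X) (hPf : ∀ a ∈ P, 0 < f a) :
    ∀ n : ℕ, ∀ a ∈ P, (P.filter (fun x => f x < f a)).card ≤ n →
    ∃ L : Multiset X,
      (∀ γ ∈ L, γ ∈ P ∧ ¬∃ b ∈ P, ∃ c ∈ P, γ = b + c) ∧ L.sum = a := by
  intro n
  induction n with
  | zero =>
    intro a ha hcard
    by_cases hind : ∃ b ∈ P, ∃ c ∈ P, a = b + c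
    · obtain ⟨b, hb, c, hc, habc⟩ := hind
      exfalso
      have hfb : f b < f a := by
        have : f a = f b + f c := by rw [habc, map_add]
        have := hPf c hc
        linarith
      have : b ∈ P.filter (fun x => f x < f a) := Finset.mem_filter.mpr ⟨hb, hfb⟩
      have := Finset.card_pos.mpr ⟨b, this⟩
      omega
    · push_neg at hind
      exact ⟨{a}, by simp [ha]; exact hind, by simp⟩
  | succ n ih =>
    intro a ha hcard
    by_cases hind : ∃ b ∈ P, ∃ c ∈ P, a = b + c
    · obtain ⟨b, hb, c, hc, habc⟩ := hind
      have hfab : f b < f a ∧ f c < f a := by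
        have : f a = f b + f c := by rw [habc, map_add]
        constructor <;> nlinarith [hPf b hb, hPf c hc]
      have hsubcard : ∀ x ∈ P, f x < f a →
          (P.filter (fun y => f y < f x)).card ≤ n := by
        intro x hx hfx
        have hss : P.filter (fun y => f y < f x) ⊂ P.filter (fun y => f y < f a) := by
          refine Finset.ssubset_iff_of_subset ?_ |>.mpr ?_
          · intro y hy
            rw [Finset.mem_filter] at hy ⊢
            exact ⟨hy.1, lt_trans hy.2 hfx⟩
          · exact ⟨x, Finset.mem_filter.mpr ⟨hx, hfx⟩, by
              intro hmem
              rw [Finset.mem_filter] at hmem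
              exact lt_irrefl _ hmem.2⟩
        have := Finset.card_lt_card hss
        omega
      obtain ⟨Lb, hLb, hLbsum⟩ := ih b hb (hsubcard b hb hfab.1)
      obtain ⟨Lc, hLc, hLcsum⟩ := ih c hc (hsubcard c hc hfab.2)
      refine ⟨Lb + Lc, ?_, by rw [Multiset.sum_add, hLbsum, hLcsum, habc]⟩
      intro γ hγ
      rcases Multiset.mem_add.mp hγ with h | h
      · exact hLb γ h
      · exact hLc γ h
    · push_neg at hind
      exact ⟨{a}, by simp [ha]; exact hind, by simp⟩

end Decomp

section Indec

variable (Φ ΦH : Finset X) (coroot : X → X →ₗ[ℚ] ℚ)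

/-- Reflecting a positive root of the subsystem in an indecomposable root
keeps it positive. -/
theorem indec_refl (f : X →ₗ[ℚ] ℚ) (hf : ∀ α ∈ Φ, f α ≠ 0)
    (h2 : ∀ α ∈ Φ, coroot α α = 2)
    (hrefl : ∀ α ∈ Φ, ∀ β ∈ Φ, β - coroot α β • α ∈ Φ)
    (hred : ∀ α ∈ Φ, ∀ c : ℚ, c • α ∈ Φ → c = 1 ∨ c = -1)
    (hcrys : ∀ α ∈ Φ, ∀ β ∈ Φ, ∃ m : ℤ, coroot α β = (m : ℚ))
    (hBc : ∀ α ∈ Φ, ∀ y : X, coroot α y * B Φ coroot α α = 2 * B Φ coroot α y)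
    (hHsub : ΦH ⊆ Φ)
    (hHneg : ∀ α ∈ ΦH, -α ∈ ΦH)
    (hHrefl : ∀ α ∈ ΦH, ∀ β ∈ ΦH, β - coroot α β • α ∈ ΦH)
    (PosH : Finset X) (hPosH : PosH = ΦH.filter (fun α => 0 < f α))
    {γ x : X} (hγ : γ ∈ PosH) (hind : ¬∃ b ∈ PosH, ∃ c ∈ PosH, γ = b + c)
    (hx : x ∈ PosH) (hne : x ≠ γ) :
    x - coroot γ x • γ ∈ PosH := by
  have hγ' := hγ; rw [hPosH, Finset.mem_filter] at hγ'
  obtain ⟨hγH, hγf⟩ := hγ'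
  have hx' := hx; rw [hPosH, Finset.mem_filter] at hx'
  obtain ⟨hxH, hxf⟩ := hx'
  have hγΦ := hHsub hγH
  have hxΦ := hHsub hxH
  have hsH : x - coroot γ x • γ ∈ ΦH := hHrefl γ hγH x hxH
  have hsΦ := hHsub hsH
  rw [hPosH, Finset.mem_filter]
  refine ⟨hsH, ?_⟩
  by_contra hns
  have hslt : f (x - coroot γ x • γ) < 0 := lt_of_le_of_ne (not_lt.mp hns) (hf _ hsΦ)
  have hflt : f x - coroot γ x * f γ < 0 := by
    rw [map_sub, map_smul, smul_eq_mul] at hslt; exact hslt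
  have hcpos : 0 < coroot γ x := by nlinarith
  have hc1 : 1 ≤ coroot γ x := int_one_le (hcrys γ hγΦ x hxΦ) hcpos
  have hxneg : x ≠ -γ := by
    intro h; rw [h, map_neg] at hxf; linarith
  have hxmγ : x - γ ∈ ΦH := lemA Φ ΦH coroot h2 hrefl hred hcrys hBc hHsub hHneg hHrefl
    hγH hxH hne hxneg hc1
  have hxmγΦ := hHsub hxmγ
  rcases (hf _ hxmγΦ).lt_or_gt with hneg1 | hpos1
  · -- f (x - γ) < 0 : then γ = x + (γ - x) decomposes
    have hmem := hHneg _ hxmγ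
    rw [neg_sub] at hmem
    have hmemPos : γ - x ∈ PosH := by
      rw [hPosH, Finset.mem_filter]
      refine ⟨hmem, ?_⟩
      rw [map_sub]
      rw [map_sub] at hneg1
      linarith
    exact hind ⟨x, hx, γ - x, hmemPos, by abel⟩
  · -- f (x - γ) > 0
    have hxmγPos : x - γ ∈ PosH := by
      rw [hPosH, Finset.mem_filter]; exact ⟨hxmγ, hpos1⟩
    rcases int_one_or_two_le (hcrys γ hγΦ x hxΦ) hc1 with hc1e | hc2
    · rw [hc1e, one_smul] at hslt; linarith
    · have hcx1 : 0 < coroot x γ := coroot_sign Φ coroot h2 hBc hγΦ hxΦ hcpos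
      have hcx1' : 1 ≤ coroot x γ := int_one_le (hcrys x hxΦ γ hγΦ) hcx1
      have h3 := prod_le_three Φ coroot h2 hrefl hred hcrys hBc hxΦ hγΦ hne hxneg hcpos
      have hc3 : coroot γ x ≤ 3 := by nlinarith
      obtain ⟨m, hm⟩ := hcrys γ hγΦ x hxΦ
      have hm2 : (2:ℤ) ≤ m := by rw [hm] at hc2; exact_mod_cast hc2
      have hm3 : m ≤ 3 := by rw [hm] at hc3; exact_mod_cast hc3
      have hxm2γ : x - γ - γ ∈ ΦH := by
        rcases (by omega : m = 2 ∨ m = 3) with he | he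
        · have heq : x - coroot γ x • γ = x - γ - γ := by
            rw [hm, he]; push_cast; module
          rw [← heq]; exact hsH
        · have hpair : (1:ℚ) ≤ coroot γ (x - γ) := by
            rw [map_sub, h2 γ hγΦ, hm, he]; norm_num
          have hn1 : x - γ ≠ γ := by
            intro h
            have hxe : x = γ + γ := sub_eq_iff_eq_add.mp h
            have hmem2 : (2:ℚ) • γ ∈ Φ := by
              rw [two_smul, ← hxe]; exact hxΦ
            rcases hred γ hγΦ 2 hmem2 with h' | h' <;> norm_num at h'
          have hn2 : x - γ ≠ -γ := by
            intro h
            have : x = 0 := by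
              have := sub_eq_iff_eq_add.mp h
              rw [this]; abel
            rw [this, map_zero] at hxf; linarith
          exact lemA Φ ΦH coroot h2 hrefl hred hcrys hBc hHsub hHneg hHrefl
            hγH hxmγ hn1 hn2 hpair
      have hxm2γΦ := hHsub hxm2γ
      rcases (hf _ hxm2γΦ).lt_or_gt with h2lt | h2gt
      · -- γ = (x - γ) + (2γ - x)
        have hmem := hHneg _ hxm2γ
        have hmemPos : -(x - γ - γ) ∈ PosH := by
          rw [hPosH, Finset.mem_filter]
          refine ⟨hmem, ?_⟩
          rw [map_neg]; linarith
        exact hind ⟨x - γ, hxmγPos, -(x - γ - γ), hmemPos, by abel⟩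
      · have hm3' : m = 3 := by
          rcases (by omega : m = 2 ∨ m = 3) with he | he
          · exfalso
            have heq : x - coroot γ x • γ = x - γ - γ := by
              rw [hm, he]; push_cast; module
            rw [heq] at hslt; linarith
          · exact he
        have hsexp : x - coroot γ x • γ = x - γ - γ - γ := by
          rw [hm, hm3']; push_cast; module
        have hsH3 : x - γ - γ - γ ∈ ΦH := by rw [← hsexp]; exact hsH
        have hmem := hHneg _ hsH3
        have hmemPos : -(x - γ - γ - γ) ∈ PosH := by
          rw [hPosH, Finset.mem_filter]
          refine ⟨hmem, ?_⟩
          rw [map_neg]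
          rw [hsexp] at hslt
          linarith
        have hxm2γPos : x - γ - γ ∈ PosH := by
          rw [hPosH, Finset.mem_filter]; exact ⟨hxm2γ, h2gt⟩
        exact hind ⟨x - γ - γ, hxm2γPos, -(x - γ - γ - γ), hmemPos, by abel⟩

/-- An indecomposable positive root pairs to exactly 2 with the sum of positive roots. -/
theorem indec_sum_two (f : X →ₗ[ℚ] ℚ) (hf : ∀ α ∈ Φ, f α ≠ 0)
    (h2 : ∀ α ∈ Φ, coroot α α = 2)
    (hrefl : ∀ α ∈ Φ, ∀ β ∈ Φ, β - coroot α β • α ∈ Φ)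
    (hred : ∀ α ∈ Φ, ∀ c : ℚ, c • α ∈ Φ → c = 1 ∨ c = -1)
    (hcrys : ∀ α ∈ Φ, ∀ β ∈ Φ, ∃ m : ℤ, coroot α β = (m : ℚ))
    (hBc : ∀ α ∈ Φ, ∀ y : X, coroot α y * B Φ coroot α α = 2 * B Φ coroot α y)
    (hHsub : ΦH ⊆ Φ)
    (hHneg : ∀ α ∈ ΦH, -α ∈ ΦH)
    (hHrefl : ∀ α ∈ ΦH, ∀ β ∈ ΦH, β - coroot α β • α ∈ ΦH)
    (PosH : Finset X) (hPosH : PosH = ΦH.filter (fun α => 0 < f α))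
    {γ : X} (hγ : γ ∈ PosH) (hind : ¬∃ b ∈ PosH, ∃ c ∈ PosH, γ = b + c) :
    coroot γ (∑ x ∈ PosH, x) = 2 := by
  classical
  have hγ' := hγ; rw [hPosH, Finset.mem_filter] at hγ'
  obtain ⟨hγH, hγf⟩ := hγ'
  have hγΦ := hHsub hγH
  have h2γ := h2 γ hγΦ
  rw [map_sum, ← Finset.add_sum_erase PosH (fun x => coroot γ x) hγ, h2γ]
  have hzero : ∑ x ∈ PosH.erase γ, coroot γ x = 0 := by
    refine Finset.sum_involution (fun a _ => a - coroot γ a • γ) ?_ ?_ ?_ ?_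
    · intro a _
      simp [map_sub, map_smul, h2γ, smul_eq_mul]
      ring
    · intro a _ hfa habs
      have h0 : coroot γ a • γ = 0 := sub_eq_self.mp habs
      rcases smul_eq_zero.mp h0 with h | h
      · exact hfa h
      · exact root_ne_zero hγΦ h2 h
    · intro a ha
      rw [Finset.mem_erase] at ha
      obtain ⟨hane, haPos⟩ := ha
      have hres : a - coroot γ a • γ ∈ PosH :=
        indec_refl Φ ΦH coroot f hf h2 hrefl hred hcrys hBc hHsub hHneg hHrefl
          PosH hPosH hγ hind haPos hane
      rw [Finset.mem_erase]
      refine ⟨?_, hres⟩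
      intro habs
      have haγ : a = γ - coroot γ γ • γ := by
        calc a = (a - coroot γ a • γ) - coroot γ (a - coroot γ a • γ) • γ :=
              (sref_invol coroot h2γ a).symm
          _ = γ - coroot γ γ • γ := by rw [habs]
      rw [h2γ] at haγ
      have haneg : a = -γ := by rw [haγ]; module
      have haf : 0 < f a := by
        have := haPos; rw [hPosH, Finset.mem_filter] at this; exact this.2
      rw [haneg, map_neg] at haf
      linarith
    · intro a _
      exact sref_invol coroot h2γ a
  rw [hzero]
  norm_num

end Indec

theorem int_sum (P : Finset X) (F : X → ℚ) (h : ∀ a ∈ P, ∃ m : ℤ, F a = m) :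
    ∃ m : ℤ, ∑ a ∈ P, F a = m := by
  classical
  induction P using Finset.induction_on with
  | empty => exact ⟨0, by simp⟩
  | insert a s hnot ih =>
    obtain ⟨m1, hm1⟩ := h a (Finset.mem_insert_self a s)
    obtain ⟨m2, hm2⟩ := ih fun x hx => h x (Finset.mem_insert_of_mem hx)
    exact ⟨m1 + m2, by rw [Finset.sum_insert hnot, hm1, hm2]; push_cast; ring⟩

end TWR


/-- (Lemma "regbound".) Let `Φ_H ⊆ Φ` be a subsystem of a finite reduced
crystallographic root system with positive systems cut out by a regular functional `f`,
half-sums `ρ`, `ρ_H`, and let `w` be a Weyl element of `Φ` taking `Φ⁺`-dominant weights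
to `Φ_H⁺`-dominant weights.  Let `μ*` pair to zero with all of `Φ_H`.  Then for every
`Φ⁺`-dominant `μ`, the weight `μ' = w(μ + ρ) − ρ_H − μ*` satisfies
`min_{α∈Φ_H⁺}⟨μ', α∨⟩ ≥ min_{α∈Φ⁺}⟨μ, α∨⟩`; in particular `μ'` is `Φ_H`-regular when
`μ` is regular. -/
theorem transfer_weight_regularity {X : Type*} [AddCommGroup X] [Module ℚ X]
    (Φ ΦH : Finset X) (coroot : X → X →ₗ[ℚ] ℚ)
    (f : X →ₗ[ℚ] ℚ) (hf : ∀ α ∈ Φ, f α ≠ 0)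
    (h2 : ∀ α ∈ Φ, coroot α α = 2)
    (hcrys : ∀ α ∈ Φ, ∀ β ∈ Φ, ∃ m : ℤ, coroot α β = (m : ℚ))
    (hneg : ∀ α ∈ Φ, -α ∈ Φ)
    (hred : ∀ α ∈ Φ, ∀ c : ℚ, c • α ∈ Φ → c = 1 ∨ c = -1)
    (hrefl : ∀ α ∈ Φ, ∀ β ∈ Φ, β - coroot α β • α ∈ Φ)
    (hHsub : ΦH ⊆ Φ)
    (hHneg : ∀ α ∈ ΦH, -α ∈ ΦH)
    (hHrefl : ∀ α ∈ ΦH, ∀ β ∈ ΦH, β - coroot α β • α ∈ ΦH)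
    (Pos PosH : Finset X)
    (hPos : Pos = Φ.filter (fun α => 0 < f α))
    (hPosH : PosH = ΦH.filter (fun α => 0 < f α))
    (ρ ρH : X)
    (hρ : ρ = (2 : ℚ)⁻¹ • ∑ α ∈ Pos, α)
    (hρH : ρH = (2 : ℚ)⁻¹ • ∑ α ∈ PosH, α)
    (W : Subgroup (X ≃ₗ[ℚ] X))
    (hW : W = Subgroup.closure
      {g : X ≃ₗ[ℚ] X | ∃ α ∈ Φ, ∀ x : X, g x = x - coroot α x • α})
    (hequiv : ∀ u ∈ W, ∀ α ∈ Φ, u α ∈ Φ ∧ ∀ x : X, coroot (u α) (u x) = coroot α x)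
    (w : X ≃ₗ[ℚ] X) (hw : w ∈ W)
    (hdom : ∀ lam : X, (∀ β ∈ Pos, 0 ≤ coroot β lam) →
      ∀ α ∈ PosH, 0 ≤ coroot α (w lam))
    (μstar : X) (hμstar : ∀ α ∈ ΦH, coroot α μstar = 0)
    (μ : X) (hμdom : ∀ β ∈ Pos, 0 ≤ coroot β μ)
    (μ' : X) (hμ' : μ' = w (μ + ρ) - ρH - μstar) :
    (∀ α ∈ PosH, ∃ β ∈ Pos, coroot β μ ≤ coroot α μ') ∧
    ((∀ β ∈ Pos, 0 < coroot β μ) → ∀ α ∈ PosH, 0 < coroot α μ') := by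
  classical
  have hPosHsub : ∀ a ∈ PosH, a ∈ ΦH ∧ 0 < f a := by
    intro a ha; rw [hPosH, Finset.mem_filter] at ha; exact ha
  -- reflections lie in the Weyl group
  have hsW : ∀ α ∈ Φ, ∃ g : X ≃ₗ[ℚ] X, g ∈ W ∧ ∀ x : X, g x = x - coroot α x • α := by
    intro α hα
    have hlm : ∀ x : X, ((LinearMap.id : X →ₗ[ℚ] X) - (coroot α).smulRight α) x = x - coroot α x • α := by
      intro x; simp [LinearMap.sub_apply, LinearMap.smulRight_apply]
    have hinvol : Function.Involutive ⇑((LinearMap.id : X →ₗ[ℚ] X) - (coroot α).smulRight α) := by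
      intro x; rw [hlm, hlm]; exact TWR.sref_invol coroot (h2 α hα) x
    refine ⟨LinearEquiv.ofInvolutive _ hinvol, ?_, fun x => hlm x⟩
    rw [hW]
    exact Subgroup.subset_closure ⟨α, hα, fun x => hlm x⟩
  have hE : ∀ α ∈ Φ, ∀ γ ∈ Φ, ∀ x : X,
      coroot (γ - coroot α γ • α) (x - coroot α x • α) = coroot γ x := by
    intro α hα γ hγ x
    obtain ⟨g, hgW, hg⟩ := hsW α hα
    have h := (hequiv g hgW γ hγ).2 x
    rw [hg γ, hg x] at h
    exact h
  have hBc : ∀ α ∈ Φ, ∀ y : X,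
      coroot α y * TWR.B Φ coroot α α = 2 * TWR.B Φ coroot α y := by
    intro α hα y
    exact TWR.B_coroot Φ coroot hα (h2 α hα) (fun γ hγ => hrefl α hα γ hγ)
      (fun γ hγ x => hE α hα γ hγ x) y
  have hcneg : ∀ β ∈ Φ, ∀ y : X, coroot (-β) y = -(coroot β y) := by
    intro β hβ y
    have e : β - coroot β β • β = -β := by rw [h2 β hβ]; module
    have h := hE β hβ β hβ (y - coroot β y • β)
    rw [TWR.sref_invol coroot (h2 β hβ) y, e] at h
    rw [h, map_sub, map_smul, h2 β hβ, smul_eq_mul]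
    ring
  have hρcor : ∀ δ : X, coroot δ ρ = coroot δ (∑ γ ∈ Pos, γ) / 2 := by
    intro δ; rw [hρ, map_smul, smul_eq_mul]; ring
  have hρHcor : ∀ δ : X, coroot δ ρH = coroot δ (∑ γ ∈ PosH, γ) / 2 := by
    intro δ; rw [hρH, map_smul, smul_eq_mul]; ring
  have hρ1 : ∀ δ ∈ Pos, 1 ≤ coroot δ ρ := by
    intro δ hδ
    have := TWR.two_le_sum_pos Φ coroot f hf h2 Φ Pos (subset_refl Φ) hrefl hPos hδ
    rw [hρcor]; linarith
  have hH2 : ∀ α ∈ PosH, 2 ≤ coroot α (∑ γ ∈ PosH, γ) := fun α hα =>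
    TWR.two_le_sum_pos Φ coroot f hf h2 ΦH PosH hHsub hHrefl hPosH hα
  have hwinv : w⁻¹ ∈ W := inv_mem hw
  have hkeyβ : ∀ α ∈ PosH, w.symm α ∈ Pos ∧
      ∀ z : X, coroot α (w z) = coroot (w.symm α) z := by
    intro α hα
    obtain ⟨hαH, hαf⟩ := hPosHsub α hα
    have hαΦ : α ∈ Φ := hHsub hαH
    have hβΦ : w.symm α ∈ Φ := (hequiv w⁻¹ hwinv α hαΦ).1
    have hcor : ∀ z : X, coroot α (w z) = coroot (w.symm α) z := by
      intro z
      have h := (hequiv w hw (w.symm α) hβΦ).2 z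
      rw [w.apply_symm_apply] at h
      exact h
    have hdomρ : 0 ≤ coroot α (w ρ) :=
      hdom ρ (fun β hβ => by linarith [hρ1 β hβ]) α hα
    have hβPos : w.symm α ∈ Pos := by
      rcases (hf _ hβΦ).lt_or_gt with hlt | hgt
      · exfalso
        have hnegPos : -(w.symm α) ∈ Pos := by
          rw [hPos, Finset.mem_filter]
          exact ⟨hneg _ hβΦ, by rw [map_neg]; linarith⟩
        have h1 := hρ1 _ hnegPos
        rw [hcneg _ hβΦ ρ] at h1
        have h3 := hcor ρ
        linarith
      · rw [hPos, Finset.mem_filter]; exact ⟨hβΦ, hgt⟩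
    exact ⟨hβPos, hcor⟩
  have hlam1 : ∀ α ∈ PosH, 1 ≤ coroot α (w ρ) := by
    intro α hα
    obtain ⟨hβPos, hcor⟩ := hkeyβ α hα
    rw [hcor ρ]
    exact hρ1 _ hβPos
  -- main induction: ⟨ρH, α∨⟩ ≤ ⟨wρ, α∨⟩ for α ∈ PosH
  have main : ∀ n : ℕ, ∀ α ∈ PosH, coroot α (∑ γ ∈ PosH, γ) ≤ (n : ℚ) →
      coroot α ρH ≤ coroot α (w ρ) := by
    intro n
    induction n with
    | zero =>
      intro α hα hb
      push_cast at hb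
      linarith [hH2 α hα]
    | succ n ih =>
      intro α hα hb
      push_cast at hb
      obtain ⟨hαH, hαf⟩ := hPosHsub α hα
      have hαΦ := hHsub hαH
      have hk2 := hH2 α hα
      by_cases hsmall : coroot α (∑ γ ∈ PosH, γ) ≤ 2
      · have hke : coroot α (∑ γ ∈ PosH, γ) = 2 := le_antisymm hsmall hk2
        rw [hρHcor α, hke]
        linarith [hlam1 α hα]
      · push_neg at hsmall
        obtain ⟨L, hL, hLsum⟩ := TWR.decomp_exists f PosH
          (fun a ha => (hPosHsub a ha).2)
          ((PosH.filter (fun x => f x < f α)).card) α hα le_rfl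
        have hBαα : 0 < TWR.B Φ coroot α α := TWR.B_self_pos Φ coroot hαΦ (h2 α hαΦ)
        have hexγ : ∃ γ ∈ L, 0 < TWR.B Φ coroot α γ := by
          by_contra hcon
          push_neg at hcon
          have hsum := TWR.B_multiset_sum Φ coroot α L
          rw [hLsum] at hsum
          have hle : (L.map (fun γ => TWR.B Φ coroot α γ)).sum ≤ 0 := by
            clear hsum hLsum
            induction L using Multiset.induction with
            | empty => simp
            | cons a s ih2 =>
              simp only [Multiset.map_cons, Multiset.sum_cons]
              have h1 := hcon a (Multiset.mem_cons_self a s)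
              have h2' := ih2 (fun γ hγ => hL γ (Multiset.mem_cons_of_mem hγ))
                (fun γ hγ => hcon γ (Multiset.mem_cons_of_mem hγ))
              linarith
          linarith
        obtain ⟨γ, hγL, hBγ⟩ := hexγ
        obtain ⟨hγPosH, hγind⟩ := hL γ hγL
        obtain ⟨hγH, hγf⟩ := hPosHsub γ hγPosH
        have hγΦ := hHsub hγH
        have hc' : 0 < coroot α γ := by nlinarith [hBc α hαΦ γ, hBαα]
        have hc'1 : 1 ≤ coroot α γ := TWR.int_one_le (hcrys α hαΦ γ hγΦ) hc'
        have hγα : α ≠ γ := by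
          rintro rfl
          have := TWR.indec_sum_two Φ ΦH coroot f hf h2 hrefl hred hcrys hBc
            hHsub hHneg hHrefl PosH hPosH hγPosH hγind
          linarith
        have hrefPos : α - coroot γ α • γ ∈ PosH :=
          TWR.indec_refl Φ ΦH coroot f hf h2 hrefl hred hcrys hBc hHsub hHneg hHrefl
            PosH hPosH hγPosH hγind hα hγα
        have hkey : ∀ z : X, coroot α z
            = coroot (α - coroot γ α • γ) z + coroot α γ * coroot γ z := by
          intro z
          have h := hE γ hγΦ α hαΦ z
          rw [map_sub, map_smul, smul_eq_mul] at h
          have hγγ : coroot (α - coroot γ α • γ) γ = -(coroot α γ) := by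
            have h2' := hE γ hγΦ α hαΦ (-γ)
            have e : (-γ : X) - coroot γ (-γ) • γ = γ := by
              rw [map_neg, h2 γ hγΦ]; module
            rw [e, map_neg] at h2'
            exact h2'
          rw [hγγ] at h
          linarith
        have hsums := hkey (∑ γ' ∈ PosH, γ')
        have hk''2 := hH2 _ hrefPos
        have hkγ2 := hH2 _ hγPosH
        have hb'' : coroot (α - coroot γ α • γ) (∑ γ' ∈ PosH, γ') ≤ (n : ℚ) := by
          nlinarith
        have hbγ : coroot γ (∑ γ' ∈ PosH, γ') ≤ (n : ℚ) := by
          nlinarith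
        have i1 := ih _ hrefPos hb''
        have i2 := ih γ hγPosH hbγ
        have e1 := hkey ρH
        have e2 := hkey (w ρ)
        nlinarith [mul_nonneg (le_of_lt hc') (sub_nonneg.mpr i2)]
  -- conclusion
  have mainfinal : ∀ α ∈ PosH, ∃ β ∈ Pos, coroot β μ ≤ coroot α μ' := by
    intro α hα
    obtain ⟨hαH, hαf⟩ := hPosHsub α hα
    have hαΦ := hHsub hαH
    obtain ⟨hβPos, hcor⟩ := hkeyβ α hα
    refine ⟨w.symm α, hβPos, ?_⟩
    have hμ'c : coroot α μ'
        = coroot (w.symm α) μ + coroot (w.symm α) ρ - coroot α ρH := by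
      rw [hμ', map_sub, map_sub, hμstar α hαH, hcor (μ + ρ), map_add]
      ring
    have hint : ∃ m : ℤ, coroot α (∑ γ' ∈ PosH, γ') = m := by
      rw [map_sum]
      exact TWR.int_sum PosH (fun a => coroot α a) fun a ha =>
        hcrys α hαΦ a (hHsub (hPosHsub a ha).1)
    obtain ⟨m, hm⟩ := hint
    have hmain := main m.toNat α hα (by
      rw [hm]
      exact_mod_cast Int.self_le_toNat m)
    have hfinal : coroot α ρH ≤ coroot (w.symm α) ρ := by
      rw [← hcor ρ]; exact hmain
    rw [hμ'c]
    linarith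
  refine ⟨mainfinal, ?_⟩
  intro hreg α hα
  obtain ⟨β, hβ, hle⟩ := mainfinal α hα
  exact lt_of_lt_of_le (hreg β hβ) hle
end

section
/- Let V be a finite-dimensional complex inner product space of dimension d ≥ 1, let U be a unitary operator on V, let α ∈ ℂ with |α| = 1, and let n ≥ 1. If tr(U^{ni+1}) = α^{ni+1}·d for every integer i ≥ 0, then U = α·id_V. -/
/-- If finitely many complex numbers of modulus at most one sum to the number of terms,
each of them equals one. -/
lemma sum_eq_card_of_norm_le_one {ι : Type*} (s : Finset ι) (z : ι → ℂ)
    (hle : ∀ j ∈ s, ‖z j‖ ≤ 1) (hsum : ∑ j ∈ s, z j = (s.card : ℂ)) :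
    ∀ j ∈ s, z j = 1 := by
  have hre : ∑ j ∈ s, (z j).re = (s.card : ℝ) := by
    have := congrArg Complex.re hsum
    simpa [Complex.re_sum] using this
  have hre1 : ∀ j ∈ s, (z j).re = 1 := by
    intro j hj
    by_contra hne
    have hlt : (z j).re < 1 := lt_of_le_of_ne (le_trans (Complex.re_le_norm _) (hle j hj)) hne
    have : ∑ k ∈ s, (z k).re < ∑ k ∈ s, (1 : ℝ) :=
      Finset.sum_lt_sum (fun k hk => le_trans (Complex.re_le_norm _) (hle k hk)) ⟨j, hj, hlt⟩
    rw [hre, Finset.sum_const, nsmul_eq_mul, mul_one] at this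
    exact lt_irrefl _ this
  intro j hj
  have h1 : (z j).re = 1 := hre1 j hj
  have h2 : ‖z j‖ ≤ 1 := by exact hle j hj
  have hsq : (z j).re ^ 2 + (z j).im ^ 2 ≤ 1 := by
    have := Complex.sq_norm (z j)
    rw [Complex.normSq_apply] at this
    nlinarith [norm_nonneg (z j)]
  have him : (z j).im = 0 := by nlinarith
  exact Complex.ext (by simp [h1]) (by simp [him])

/-- Let `U` be a unitary operator on a `d`-dimensional complex inner product space
(`d ≥ 1`), `α` a unimodular complex number and `n ≥ 1`.  If `tr(U^(ni+1)) = α^(ni+1)·d`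
for all `i ≥ 0`, then `U = α·id`. -/
theorem unitary_trace_scalar {V : Type*} [NormedAddCommGroup V]
    [InnerProductSpace ℂ V] [FiniteDimensional ℂ V]
    (hd : 1 ≤ Module.finrank ℂ V)
    (U : V →ₗ[ℂ] V) (hU : ∀ v : V, ‖U v‖ = ‖v‖)
    (α : ℂ) (hα : ‖α‖ = 1) (n : ℕ) (hn : 1 ≤ n)
    (htr : ∀ i : ℕ, LinearMap.trace ℂ V (U ^ (n * i + 1))
      = α ^ (n * i + 1) * (Module.finrank ℂ V : ℂ)) :
    U = α • (1 : V →ₗ[ℂ] V) := by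
  -- only the case i = 0 is needed: tr U = α * d
  have h0 : LinearMap.trace ℂ V U = α * (Module.finrank ℂ V : ℂ) := by
    have := htr 0; simpa using this
  set d := Module.finrank ℂ V with hdd
  let b : OrthonormalBasis (Fin d) ℂ V := stdOrthonormalBasis ℂ V
  -- trace as sum of diagonal inner products
  have htrace : LinearMap.trace ℂ V U = ∑ j, inner ℂ (b j) (U (b j)) := by
    rw [LinearMap.trace_eq_matrix_trace ℂ b.toBasis U, Matrix.trace]
    congr 1
    ext j
    rw [Matrix.diag_apply, LinearMap.toMatrix_apply]
    simp [← b.repr_apply_apply]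
  set z : Fin d → ℂ := fun j => (starRingEnd ℂ) α * inner ℂ (b j) (U (b j)) with hz
  have hb1 : ∀ j, ‖b j‖ = 1 := fun j => b.orthonormal.1 j
  have hnorm : ∀ j, ‖(inner ℂ (b j) (U (b j)) : ℂ)‖ ≤ 1 := by
    intro j
    calc ‖(inner ℂ (b j) (U (b j)) : ℂ)‖ ≤ ‖b j‖ * ‖U (b j)‖ := norm_inner_le_norm _ _
      _ = 1 := by rw [hU, hb1]; ring
  have hzsum : ∑ j, z j = ((Finset.univ : Finset (Fin d)).card : ℂ) := by
    simp only [hz, ← Finset.mul_sum, ← htrace, h0, ← mul_assoc]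
    have : (starRingEnd ℂ) α * α = 1 := by
      rw [mul_comm, Complex.mul_conj, Complex.normSq_eq_norm_sq, hα]
      norm_num
    rw [this, one_mul]
    simp
  have hz1 : ∀ j, z j = 1 := by
    intro j
    exact sum_eq_card_of_norm_le_one Finset.univ z
      (fun j _ => by
        rw [hz]; simp only []
        calc ‖(starRingEnd ℂ) α * inner ℂ (b j) (U (b j))‖
            = ‖α‖ * ‖(inner ℂ (b j) (U (b j)) : ℂ)‖ := by rw [norm_mul, RCLike.norm_conj]
          _ ≤ 1 := by rw [hα, one_mul]; exact hnorm j)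
      hzsum j (Finset.mem_univ j)
  -- conclude U (b j) = α • b j for each j
  have hact : ∀ j, U (b j) = α • b j := by
    intro j
    have key : (inner ℂ (α • b j) (U (b j)) : ℂ) = (‖α • b j‖ : ℂ) * ‖U (b j)‖ := by
      rw [inner_smul_left]
      have : (starRingEnd ℂ) α * inner ℂ (b j) (U (b j)) = 1 := hz1 j
      rw [this, norm_smul, hα, hU, hb1]
      norm_num
    have := inner_eq_norm_mul_iff.mp key
    rw [hU, hb1, norm_smul, hα, hb1] at this
    simpa using this.symm
  apply b.toBasis.ext
  intro j
  simp [hact j]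
end

section
/- Let G be a locally compact Hausdorff topological group, X a closed subgroup of the center of G equipped with a Haar measure, and χ : X → ℂ a continuous unitary character. Let h : G → ℂ be a continuous function satisfying h(gx) = χ(x)⁻¹h(g) for all g ∈ G, x ∈ X, and whose support is compact modulo X (i.e., contained in C·X for some compact C ⊆ G). Then there exists a continuous compactly supported function f : G → ℂ such that for all g ∈ G, ∫_X f(gx)χ(x) dx = h(g). -/
open MeasureTheory Pointwise

/-- (Surjectivity of averaging.) Let `G` be a locally compact Hausdorff group, `X` a
closed central subgroup with a Haar measure, and `χ` a continuous unitary character of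
`X`.  Every continuous `h : G → ℂ` with `h(gx) = χ(x)⁻¹ h(g)` and support compact
modulo `X` is the `χ`-average of a continuous compactly supported function on `G`. -/
theorem averaging_surjective {G : Type*} [Group G] [TopologicalSpace G]
    [IsTopologicalGroup G] [LocallyCompactSpace G] [T2Space G]
    (X : Subgroup G) (hXc : X ≤ Subgroup.center G) (hXcl : IsClosed (X : Set G))
    [MeasurableSpace X] [BorelSpace X]
    (μ : Measure X) [μ.IsHaarMeasure]
    (χ : X → ℂ) (hχc : Continuous χ) (hχm : ∀ x y : X, χ (x * y) = χ x * χ y)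
    (hχu : ∀ x : X, ‖χ x‖ = 1)
    (h : G → ℂ) (hc : Continuous h)
    (htrans : ∀ (g : G) (x : X), h (g * (x : G)) = (χ x)⁻¹ * h g)
    (hsupp : ∃ C : Set G, IsCompact C ∧ Function.support h ⊆ C * (X : Set G)) :
    ∃ f : G → ℂ, Continuous f ∧ HasCompactSupport f ∧
      ∀ g : G, (∫ x : X, f (g * (x : G)) * χ x ∂μ) = h g := by
  obtain ⟨C, hC, hsupp⟩ := hsupp
  -- `χ` is nowhere vanishing
  have hχ0 : ∀ x : X, χ x ≠ 0 := by
    intro x hx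
    have := hχu x
    rw [hx] at this
    simp at this
  -- the coercion `X → G` is a closed embedding
  have emb : Topology.IsClosedEmbedding ((↑) : X → G) := hXcl.isClosedEmbedding_subtypeVal
  have key_compact : ∀ (g : G) (S : Set G), IsCompact S → IsCompact {x : X | g * ↑x ∈ S} := by
    intro g S hS
    have : {x : X | g * ↑x ∈ S} = ((↑) : X → G) ⁻¹' ((fun y => g * y) ⁻¹' S) := rfl
    rw [this]
    exact emb.isCompact_preimage ((Homeomorph.mulLeft g).isClosedEmbedding.isCompact_preimage hS)
  -- a compact set `K` with `C ⊆ interior K`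
  obtain ⟨K, hK, hCK⟩ := exists_compact_superset hC
  -- the cutoff function `c`
  obtain ⟨c, hc_one, -, hc_supp, hc_mem⟩ :=
    exists_continuous_one_zero_of_isCompact hK isClosed_empty (Set.disjoint_empty K)
  have hc_cont : Continuous c := c.continuous
  have hc_nonneg : ∀ y, 0 ≤ c y := fun y => (hc_mem y).1
  have hc_le_one : ∀ y, c y ≤ 1 := fun y => (hc_mem y).2
  -- the averaged cutoff `m`
  set m : G → ℝ := fun g => ∫ x : X, c (g * ↑x) ∂μ with hm_def
  -- translation invariance of `m`
  have hm_inv : ∀ (g : G) (x : X), m (g * ↑x) = m g := by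
    intro g x
    have := integral_mul_left_eq_self (μ := μ) (fun y : X => c (g * ↑y)) x
    simp only [Subgroup.coe_mul, ← mul_assoc] at this
    exact this
  -- for each `g`, the integrand is continuous and compactly supported
  have hF_cont : ∀ g : G, Continuous fun x : X => c (g * ↑x) := fun g =>
    hc_cont.comp ((continuous_mul_left g).comp continuous_subtype_val)
  have hF_supp : ∀ g : G, HasCompactSupport fun x : X => c (g * ↑x) := by
    intro g
    apply HasCompactSupport.intro (key_compact g (tsupport c) hc_supp)
    intro x hx
    exact image_eq_zero_of_notMem_tsupport hx
  have hF_int : ∀ g : G, Integrable (fun x : X => c (g * ↑x)) μ := fun g =>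
    (hF_cont g).integrable_of_hasCompactSupport (hF_supp g)
  -- the open set `U` on which `m` is positive
  set U : Set G := interior K * (X : Set G) with hU_def
  have hU_open : IsOpen U := isOpen_interior.mul_right
  have hCXU : C * (X : Set G) ⊆ U := Set.mul_subset_mul_right hCK
  have hm_pos : ∀ g ∈ U, 0 < m g := by
    intro g hg
    obtain ⟨u, hu, x, hx, rfl⟩ := hg
    rw [hm_def]
    rw [integral_pos_iff_support_of_nonneg (fun y => hc_nonneg _) (hF_int _)]
    have hVopen : IsOpen {y : X | u * x * ↑y ∈ interior K} :=
      isOpen_interior.preimage ((continuous_mul_left (u * x)).comp continuous_subtype_val)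
    have hVne : ((⟨x, hx⟩ : X)⁻¹ : X) ∈ {y : X | u * x * ↑y ∈ interior K} := by
      show u * x * (x⁻¹ : G) ∈ interior K
      simpa [mul_assoc] using hu
    have hVsub : {y : X | u * x * ↑y ∈ interior K} ⊆
        Function.support fun y : X => c (u * x * ↑y) := by
      intro y hy
      have : c (u * x * ↑y) = 1 := hc_one (interior_subset hy)
      simp [Function.mem_support, this]
    exact lt_of_lt_of_le (hVopen.measure_pos μ ⟨_, hVne⟩) (measure_mono hVsub)
  -- continuity of `m`
  have hm_cont : Continuous m := by
    rw [continuous_iff_continuousAt]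
    intro g₀
    obtain ⟨N, hN_comp, hN_mem⟩ := exists_compact_mem_nhds g₀
    set S : Set X := {x : X | (1 : G) * ↑x ∈ N⁻¹ * tsupport c} with hS_def
    have hS_comp : IsCompact S := key_compact 1 _ (hN_comp.inv.mul hc_supp)
    have hcon : ContinuousOn m N := by
      apply continuousOn_integral_of_compact_support hS_comp
      · exact (hc_cont.comp
          (continuous_fst.mul (continuous_subtype_val.comp continuous_snd))).continuousOn
      · intro p x hp hx
        by_contra h0
        apply hx
        show (1 : G) * ↑x ∈ N⁻¹ * tsupport c
        rw [one_mul]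
        exact ⟨p⁻¹, Set.inv_mem_inv.mpr hp, p * ↑x, subset_tsupport _ h0, by group⟩
    exact hcon.continuousAt hN_mem
  -- the function `f`
  refine ⟨fun g => (↑(c g / m g) : ℂ) * h g, ?_, ?_, ?_⟩
  · -- continuity
    rw [continuous_iff_continuousAt]
    intro g₀
    by_cases hg₀ : m g₀ = 0
    · -- near `g₀`, the function vanishes
      have hg₀U : g₀ ∉ U := fun hg => (hm_pos g₀ hg).ne' hg₀
      have htsh : tsupport h ⊆ U :=
        (closure_minimal hsupp (hXcl.mul_left_of_isCompact hC)).trans hCXU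
      have hmem : (tsupport h)ᶜ ∈ nhds g₀ :=
        (isClosed_tsupport h).isOpen_compl.mem_nhds fun hg => hg₀U (htsh hg)
      have : ∀ g ∈ (tsupport h)ᶜ, (↑(c g / m g) : ℂ) * h g = 0 := by
        intro g hg
        rw [image_eq_zero_of_notMem_tsupport hg, mul_zero]
      refine ContinuousAt.congr (continuousAt_const (y := (0 : ℂ))) (Filter.eventuallyEq_of_mem hmem ?_)
      intro g hg
      exact (this g hg).symm
    · exact ((Complex.continuous_ofReal.continuousAt.comp
        (hc_cont.continuousAt.div hm_cont.continuousAt hg₀)).mul hc.continuousAt)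
  · -- compact support
    apply HasCompactSupport.intro hc_supp
    intro g hg
    rw [image_eq_zero_of_notMem_tsupport hg]
    simp
  · -- the averaging identity
    intro g
    by_cases hg : h g = 0
    · have : ∀ x : X, (↑(c (g * ↑x) / m (g * ↑x)) : ℂ) * h (g * ↑x) * χ x = 0 := by
        intro x
        rw [htrans, hg, mul_zero, mul_zero, zero_mul]
      simp only [this, integral_zero, hg]
    · have hgU : g ∈ U := hCXU (hsupp (Function.mem_support.mpr hg))
      have hmg : 0 < m g := hm_pos g hgU
      have hmgC : (↑(m g) : ℂ) ≠ 0 := by exact_mod_cast hmg.ne'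
      have key : ∀ x : X, (↑(c (g * ↑x) / m (g * ↑x)) : ℂ) * h (g * ↑x) * χ x =
          (h g / ↑(m g)) * ↑(c (g * ↑x)) := by
        intro x
        rw [hm_inv g x, htrans]
        push_cast
        field_simp [hχ0 x]
      simp only [key]
      rw [MeasureTheory.integral_const_mul]
      have hcoe : (∫ x : X, ((c (g * ↑x) : ℝ) : ℂ) ∂μ) = ((m g : ℝ) : ℂ) := integral_ofReal
      rw [hcoe, div_mul_cancel₀ _ hmgC]
end
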